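/- Let g be the Lie algebra VI_0 ⊕ ℝ. Define r : g* → g by r(ε1) = e2, r(ε2) = −e1, r(ε3) = e4, r(ε4) = −e3 (the 2-vector e1∧e2 + e3∧e4). Then r is a bijective skew-symmetric solution of the CYBE, and for all real numbers n1, n2, n3, n4, the endomorphism n defined by n(e1) = n1·e1 + n3·e4, n(e2) = n1·e2 + n2·e4, n(e3) = n2·e1 − n3·e2 + n4·e3, n(e4) = n4·e4 makes (r, n) an r-n structure on g. -/

import Mathlib

noncomputable section

open Module

variable {g : Type*} [LieRing g] [LieAlgebra ℝ g]

/-- The coadjoint operator: `(coad X α) Y = -α ⁅X, Y⁆`. -/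
def coad (X : g) : Module.Dual ℝ g →ₗ[ℝ] Module.Dual ℝ g :=
  -(LieAlgebra.ad ℝ g X).dualMap

/-- A linear map `r : g* → g` is skew-symmetric if `α (r β) = -β (r α)`. -/
def IsSkew (r : Module.Dual ℝ g →ₗ[ℝ] g) : Prop :=
  ∀ α β : Module.Dual ℝ g, α (r β) = -β (r α)

/-- The Sklyanin bracket on `g*` defined by `r`. -/
def sklyanin (r : Module.Dual ℝ g →ₗ[ℝ] g) (α β : Module.Dual ℝ g) : Module.Dual ℝ g :=
  coad (r α) β - coad (r β) α

/-- `r` is a solution of the classical Yang-Baxter equation. -/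
def IsCYBE (r : Module.Dual ℝ g →ₗ[ℝ] g) : Prop :=
  ∀ α β : Module.Dual ℝ g, r (sklyanin r α β) = ⁅r α, r β⁆

/-- `n : g → g` is a Nijenhuis operator. -/
def IsNijenhuis (n : g →ₗ[ℝ] g) : Prop :=
  ∀ X Y : g, ⁅n X, n Y⁆ - n ⁅n X, Y⁆ - n ⁅X, n Y⁆ + n (n ⁅X, Y⁆) = 0

/-- `(r, n)` is an r-n structure on `g`. -/
def IsRN (r : Module.Dual ℝ g →ₗ[ℝ] g) (n : g →ₗ[ℝ] g) : Prop :=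
  IsSkew r ∧ IsCYBE r ∧ IsNijenhuis n ∧
    (∀ α : Module.Dual ℝ g, n (r α) = r (n.dualMap α)) ∧
    ∀ α β : Module.Dual ℝ g,
      coad (r α) (n.dualMap β) - coad (r β) (n.dualMap α)
        - n.dualMap (coad (r α) β) + n.dualMap (coad (r β) α) = 0

/-- The Nijenhuis concomitant of two endomorphisms. -/
def nijConcomitant (n' n : g →ₗ[ℝ] g) (X Y : g) : g :=
  ⁅n' X, n Y⁆ + ⁅n X, n' Y⁆ - n' ⁅n X, Y⁆ - n' ⁅X, n Y⁆ - n ⁅n' X, Y⁆ - n ⁅X, n' Y⁆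
    + n' (n ⁅X, Y⁆) + n (n' ⁅X, Y⁆)

/-- The underlying space of the Lie algebra `VI0R`: `ℝ⁴`. -/
def VI0R : Type := Fin 4 → ℝ

instance : AddCommGroup VI0R := inferInstanceAs (AddCommGroup (Fin 4 → ℝ))
instance : Module ℝ VI0R := inferInstanceAs (Module ℝ (Fin 4 → ℝ))

namespace VI0R

@[simp] theorem add_apply (x y : VI0R) (i : Fin 4) : (x + y) i = x i + y i := rfl
@[simp] theorem smul_apply (c : ℝ) (x : VI0R) (i : Fin 4) : (c • x) i = c * x i := rfl
@[simp] theorem neg_apply (x : VI0R) (i : Fin 4) : (-x) i = -(x i) := rfl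
@[simp] theorem sub_apply (x y : VI0R) (i : Fin 4) : (x - y) i = x i - y i := rfl
@[simp] theorem zero_apply (i : Fin 4) : (0 : VI0R) i = 0 := rfl

/-- The bracket of `VI0R`. -/
def br (x y : VI0R) : VI0R := fun i =>
  if i = 0 then x 0 * y 2 - x 2 * y 0
  else if i = 1 then -(x 1 * y 2 - x 2 * y 1)
  else if i = 2 then 0
  else 0

@[simp] theorem br_apply (x y : VI0R) (i : Fin 4) :
    br x y i = if i = 0 then x 0 * y 2 - x 2 * y 0
      else if i = 1 then -(x 1 * y 2 - x 2 * y 1)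
      else if i = 2 then 0
      else 0 := rfl

instance : LieRing VI0R where
  bracket := br
  add_lie x y z := by funext i; show br (x + y) z i = (br x z + br y z) i; simp; split_ifs <;> ring
  lie_add x y z := by funext i; show br x (y + z) i = (br x y + br x z) i; simp; split_ifs <;> ring
  lie_self x := by funext i; show br x x i = (0 : VI0R) i; simp; split_ifs <;> ring
  leibniz_lie x y z := by
    funext i; show br x (br y z) i = (br (br x y) z + br y (br x z)) i
    simp; split_ifs <;> ring

instance : LieAlgebra ℝ VI0R where
  lie_smul c x y := by
    funext i; show br x (c • y) i = (c • br x y) i; simp; split_ifs <;> ring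

/-- Basis vectors `e1, e2, e3, e4` (zero-indexed). -/
def e (i : Fin 4) : VI0R := fun j => if j = i then 1 else 0

/-- Dual basis `ε1, ε2, ε3, ε4` (zero-indexed). -/
def eps (i : Fin 4) : Module.Dual ℝ VI0R where
  toFun x := x i
  map_add' _ _ := rfl
  map_smul' _ _ := rfl

end VI0R

/-! Every functional on `VI0R` is determined by its four coordinates in the dual basis, so the
hypotheses pin `r` and `n` down to explicit coordinate formulas. All identities of an r-n
structure are then polynomial identities in these coordinates, verified componentwise. -/

@[simp] theorem coad_apply {g : Type*} [LieRing g] [LieAlgebra ℝ g]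
    (X : g) (α : Module.Dual ℝ g) (y : g) : coad X α y = -α ⁅X, y⁆ := by
  simp [coad]

namespace VI0R

@[simp] theorem e_apply (i j : Fin 4) : e i j = if j = i then 1 else 0 := rfl

@[simp] theorem eps_apply (i : Fin 4) (x : VI0R) : eps i x = x i := rfl

@[simp] theorem lie_apply (x y : VI0R) (i : Fin 4) :
    ⁅x, y⁆ i = if i = 0 then x 0 * y 2 - x 2 * y 0
      else if i = 1 then -(x 1 * y 2 - x 2 * y 1)
      else if i = 2 then 0
      else 0 := rfl

theorem eq_sum_smul_e (x : VI0R) : x = x 0 • e 0 + x 1 • e 1 + x 2 • e 2 + x 3 • e 3 := by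
  funext j; fin_cases j <;> simp

theorem dual_apply_eq (α : Module.Dual ℝ VI0R) (x : VI0R) :
    α x = x 0 * α (e 0) + x 1 * α (e 1) + x 2 * α (e 2) + x 3 * α (e 3) := by
  conv_lhs => rw [eq_sum_smul_e x]
  simp [smul_eq_mul]

theorem dual_eq_sum_smul_eps (α : Module.Dual ℝ VI0R) :
    α = α (e 0) • eps 0 + α (e 1) • eps 1 + α (e 2) • eps 2 + α (e 3) • eps 3 := by
  ext x
  rw [dual_apply_eq α x]
  simp only [LinearMap.add_apply, LinearMap.smul_apply, eps_apply, smul_eq_mul]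
  ring

/-- Unlike `dual_apply_eq`, the coordinate formula obtained here can be handed to `simp`
without looping. -/
theorem exists_coords (α : Module.Dual ℝ VI0R) :
    ∃ a : Fin 4 → ℝ, ∀ x : VI0R, α x = x 0 * a 0 + x 1 * a 1 + x 2 * a 2 + x 3 * a 3 :=
  ⟨fun i => α (e i), dual_apply_eq α⟩

/-- The r-matrix of the 2-vector `e1 ∧ e2 + e3 ∧ e4`. -/
def rStd : Module.Dual ℝ VI0R →ₗ[ℝ] VI0R where
  toFun α := α (e 0) • e 1 + α (e 1) • -e 0 + α (e 2) • e 3 + α (e 3) • -e 2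
  map_add' α β := by simp only [LinearMap.add_apply]; module
  map_smul' c α := by simp only [LinearMap.smul_apply, RingHom.id_apply]; module

theorem rStd_apply (α : Module.Dual ℝ VI0R) :
    rStd α = α (e 0) • e 1 + α (e 1) • -e 0 + α (e 2) • e 3 + α (e 3) • -e 2 := rfl

@[simp] theorem rStd_apply_apply (α : Module.Dual ℝ VI0R) (j : Fin 4) :
    rStd α j = ![-α (e 1), α (e 0), -α (e 3), α (e 2)] j := by
  fin_cases j <;> simp [rStd_apply]

theorem eq_rStd {r : Module.Dual ℝ VI0R →ₗ[ℝ] VI0R}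
    (h1 : r (eps 0) = e 1) (h2 : r (eps 1) = -e 0)
    (h3 : r (eps 2) = e 3) (h4 : r (eps 3) = -e 2) : r = rStd := by
  refine LinearMap.ext fun α => ?_
  conv_lhs => rw [dual_eq_sum_smul_eps α]
  simp only [map_add, map_smul, h1, h2, h3, h4, rStd_apply]

theorem isSkew_rStd : IsSkew rStd := by
  intro α β
  rw [dual_apply_eq α, dual_apply_eq β]
  simp only [rStd_apply_apply, Matrix.cons_val]
  ring

theorem bijective_rStd : Function.Bijective rStd := by
  refine Function.bijective_iff_has_inverse.mpr
    ⟨fun x => x 1 • eps 0 - x 0 • eps 1 + x 3 • eps 2 - x 2 • eps 3, fun α => ?_, fun x => ?_⟩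
  · ext x
    rw [dual_apply_eq α x]
    simp only [rStd_apply_apply, Matrix.cons_val, LinearMap.sub_apply, LinearMap.add_apply,
      LinearMap.smul_apply, eps_apply, smul_eq_mul]
    ring
  · funext j; fin_cases j <;> simp

theorem isCYBE_rStd : IsCYBE rStd := by
  intro α β
  obtain ⟨a, ha⟩ := exists_coords α
  obtain ⟨b, hb⟩ := exists_coords β
  funext j
  fin_cases j <;> simp [sklyanin, ha, hb] <;> ring

def nStd (n1 n2 n3 n4 : ℝ) : VI0R →ₗ[ℝ] VI0R where
  toFun x := x 0 • (n1 • e 0 + n3 • e 3) + x 1 • (n1 • e 1 + n2 • e 3)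
    + x 2 • (n2 • e 0 - n3 • e 1 + n4 • e 2) + x 3 • (n4 • e 3)
  map_add' x y := by simp only [add_apply]; module
  map_smul' c x := by simp only [smul_apply, RingHom.id_apply]; module

theorem nStd_apply (n1 n2 n3 n4 : ℝ) (x : VI0R) :
    nStd n1 n2 n3 n4 x = x 0 • (n1 • e 0 + n3 • e 3) + x 1 • (n1 • e 1 + n2 • e 3)
      + x 2 • (n2 • e 0 - n3 • e 1 + n4 • e 2) + x 3 • (n4 • e 3) := rfl

@[simp] theorem nStd_apply_apply (n1 n2 n3 n4 : ℝ) (x : VI0R) (j : Fin 4) :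
    nStd n1 n2 n3 n4 x j = ![n1 * x 0 + n2 * x 2, n1 * x 1 - n3 * x 2, n4 * x 2,
      n3 * x 0 + n2 * x 1 + n4 * x 3] j := by
  fin_cases j <;> simp [nStd_apply] <;> ring

theorem eq_nStd {n1 n2 n3 n4 : ℝ} {n : VI0R →ₗ[ℝ] VI0R}
    (h1 : n (e 0) = n1 • e 0 + n3 • e 3) (h2 : n (e 1) = n1 • e 1 + n2 • e 3)
    (h3 : n (e 2) = n2 • e 0 - n3 • e 1 + n4 • e 2) (h4 : n (e 3) = n4 • e 3) :
    n = nStd n1 n2 n3 n4 := by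
  refine LinearMap.ext fun x => ?_
  conv_lhs => rw [eq_sum_smul_e x]
  simp only [map_add, map_smul, h1, h2, h3, h4, nStd_apply]

variable (n1 n2 n3 n4 : ℝ)

theorem isNijenhuis_nStd : IsNijenhuis (nStd n1 n2 n3 n4) := by
  intro X Y
  funext j
  fin_cases j <;> simp <;> ring

theorem nStd_rStd_eq_rStd_dualMap (α : Module.Dual ℝ VI0R) :
    nStd n1 n2 n3 n4 (rStd α) = rStd ((nStd n1 n2 n3 n4).dualMap α) := by
  obtain ⟨a, ha⟩ := exists_coords α
  funext j
  fin_cases j <;> simp [ha] <;> ring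

theorem concomitant_rStd_nStd_eq_zero (α β : Module.Dual ℝ VI0R) :
    coad (rStd α) ((nStd n1 n2 n3 n4).dualMap β) - coad (rStd β) ((nStd n1 n2 n3 n4).dualMap α)
      - (nStd n1 n2 n3 n4).dualMap (coad (rStd α) β)
      + (nStd n1 n2 n3 n4).dualMap (coad (rStd β) α) = 0 := by
  obtain ⟨a, ha⟩ := exists_coords α
  obtain ⟨b, hb⟩ := exists_coords β
  ext x
  simp only [LinearMap.add_apply, LinearMap.sub_apply, LinearMap.zero_apply, coad_apply,
    LinearMap.dualMap_apply, ha, hb, nStd_apply_apply, rStd_apply_apply, lie_apply, e_apply,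
    Matrix.cons_val, Fin.isValue, Fin.reduceEq, zero_ne_one, one_ne_zero, ↓reduceIte,
    zero_mul, one_mul, mul_zero, zero_add, add_zero, sub_zero]
  ring

theorem isRN_rStd_nStd : IsRN rStd (nStd n1 n2 n3 n4) :=
  ⟨isSkew_rStd, isCYBE_rStd, isNijenhuis_nStd n1 n2 n3 n4,
    nStd_rStd_eq_rStd_dualMap n1 n2 n3 n4, concomitant_rStd_nStd_eq_zero n1 n2 n3 n4⟩

end VI0R

open VI0R in
/-- On the Lie algebra `VI_0 ⊕ ℝ` (bracket `[e1,e3] = e1`,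
`[e2,e3] = -e2`), the map `r` with `r(ε1) = e2`, `r(ε2) = -e1`, `r(ε3) = e4`,
`r(ε4) = -e3` (the 2-vector `e1∧e2 + e3∧e4`) is a bijective skew-symmetric solution of
the CYBE, and for all reals `n1, n2, n3, n4`, the endomorphism `n` with
`n(e1) = n1·e1 + n3·e4`, `n(e2) = n1·e2 + n2·e4`, `n(e3) = n2·e1 - n3·e2 + n4·e3`,
`n(e4) = n4·e4` makes `(r, n)` an r-n structure on `g`. -/
theorem vi0r_r_and_rn
    (r : Module.Dual ℝ VI0R →ₗ[ℝ] VI0R)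
    (h1 : r (eps 0) = e 1) (h2 : r (eps 1) = -e 0)
    (h3 : r (eps 2) = e 3) (h4 : r (eps 3) = -e 2) :
    (IsSkew r ∧ Function.Bijective r ∧ IsCYBE r) ∧
    ∀ (n1 n2 n3 n4 : ℝ) (n : VI0R →ₗ[ℝ] VI0R),
      n (e 0) = n1 • e 0 + n3 • e 3 →
      n (e 1) = n1 • e 1 + n2 • e 3 →
      n (e 2) = n2 • e 0 - n3 • e 1 + n4 • e 2 →
      n (e 3) = n4 • e 3 →
      IsRN r n := by
  obtain rfl := eq_rStd h1 h2 h3 h4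
  refine ⟨⟨isSkew_rStd, bijective_rStd, isCYBE_rStd⟩, ?_⟩
  intro n1 n2 n3 n4 n hn1 hn2 hn3 hn4
  obtain rfl := eq_nStd hn1 hn2 hn3 hn4
  exact isRN_rStd_nStd n1 n2 n3 n4
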